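/- Let H and K be complex Hilbert spaces, I an index set, and φ : B(ℓ²(I;H)) → B(ℓ²(I;K)) a linear map that is completely positive and contractive and satisfies φ(pᵢ) = pᵢ for every i ∈ I (where pᵢ denotes the i-th coordinate projection on ℓ²(I;H) and on ℓ²(I;K) respectively). Then φ(pᵢ ∘ T ∘ pⱼ) = pᵢ ∘ φ(T) ∘ pⱼ for every bounded operator T on ℓ²(I;H) and all i, j ∈ I. -/

import Mathlib

noncomputable section

open ContinuousLinearMap

abbrev l2 (I : Type*) (H : Type*) [NormedAddCommGroup H] [InnerProductSpace ℂ H] : Type _ :=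
  lp (fun _ : I => H) 2

variable {I : Type*} [DecidableEq I]
variable {H K : Type*} [NormedAddCommGroup H] [InnerProductSpace ℂ H] [CompleteSpace H]
  [NormedAddCommGroup K] [InnerProductSpace ℂ K] [CompleteSpace K]

def inclCLM (H : Type*) [NormedAddCommGroup H] [InnerProductSpace ℂ H] (i : I) :
    H →L[ℂ] l2 I H :=
  LinearMap.mkContinuous
    { toFun := fun a => lp.single 2 i a
      map_add' := fun a b => by
        apply lp.ext
        funext j
        by_cases h : j = i
        · subst h
          simp [lp.single_apply_self]
        · simp [lp.single_apply_ne 2 i _ h]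
      map_smul' := fun c a => by
        simpa using lp.single_smul 2 i a c }
    1 (fun a => by
      simpa using le_of_eq (lp.norm_single (p := 2) (by norm_num) (fun _ : I => a) i))

@[simp] lemma inclCLM_apply (i : I) (a : H) : inclCLM H i a = lp.single 2 i a := rfl

def evalCLM (H : Type*) [NormedAddCommGroup H] [InnerProductSpace ℂ H] [CompleteSpace H]
    (i : I) : l2 I H →L[ℂ] H :=
  ContinuousLinearMap.adjoint (inclCLM H i)

@[simp] lemma evalCLM_apply (i : I) (f : l2 I H) : evalCLM H i f = f i := by
  apply ext_inner_right ℂ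
  intro v
  rw [evalCLM, ContinuousLinearMap.adjoint_inner_left]
  simpa using lp.inner_single_right (𝕜 := ℂ) i v f

lemma eval_comp_incl (k i : I) :
    (evalCLM H k).comp (inclCLM H i) = if k = i then (1 : H →L[ℂ] H) else 0 := by
  ext x
  by_cases h : k = i
  · subst h
    simp [lp.single_apply_self]
  · simp [h, lp.single_apply_ne 2 i _ h]

def projCLM (H : Type*) [NormedAddCommGroup H] [InnerProductSpace ℂ H] [CompleteSpace H]
    (i : I) : l2 I H →L[ℂ] l2 I H :=
  (inclCLM H i).comp (evalCLM H i)

/-- The operator `ℓ²-direct-sum` action of a finite matrix of operators: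
`(A u)ₖ = Σₗ A k l (u l)`. -/
def matOp {n : ℕ} {X Y : Type*} [NormedAddCommGroup X] [InnerProductSpace ℂ X] [CompleteSpace X]
    [NormedAddCommGroup Y] [InnerProductSpace ℂ Y]
    (A : Matrix (Fin n) (Fin n) (X →L[ℂ] Y)) :
    l2 (Fin n) X →L[ℂ] l2 (Fin n) Y :=
  ∑ k : Fin n, ∑ l : Fin n, (inclCLM Y k).comp ((A k l).comp (evalCLM X l))


local notation "⟪" x ", " y "⟫" => @inner ℂ _ _ x y

section Aux

variable {n : ℕ} {X Y : Type*} [NormedAddCommGroup X] [InnerProductSpace ℂ X] [CompleteSpace X]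
  [NormedAddCommGroup Y] [InnerProductSpace ℂ Y] [CompleteSpace Y]

lemma inner_incl_right (k : Fin n) (v : Y) (w : l2 (Fin n) Y) :
    ⟪w, inclCLM Y k v⟫ = ⟪w k, v⟫ := by
  rw [← adjoint_inner_left (inclCLM Y k) v w]
  rw [show ContinuousLinearMap.adjoint (inclCLM Y k) = evalCLM Y k from rfl, evalCLM_apply]

lemma inner_incl_left (k : Fin n) (v : Y) (w : l2 (Fin n) Y) :
    ⟪inclCLM Y k v, w⟫ = ⟪v, w k⟫ := by
  rw [← adjoint_inner_right (inclCLM Y k) v w]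
  rw [show ContinuousLinearMap.adjoint (inclCLM Y k) = evalCLM Y k from rfl, evalCLM_apply]

lemma matOp_apply (A : Matrix (Fin n) (Fin n) (X →L[ℂ] Y)) (w : l2 (Fin n) X) :
    matOp A w = ∑ k : Fin n, ∑ l : Fin n, inclCLM Y k (A k l (w l)) := by
  simp [matOp, ContinuousLinearMap.sum_apply]

lemma inner_matOp_right (A : Matrix (Fin n) (Fin n) (X →L[ℂ] X)) (w v : l2 (Fin n) X) :
    ⟪v, matOp A w⟫ = ∑ k : Fin n, ∑ l : Fin n, ⟪v k, A k l (w l)⟫ := by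
  rw [matOp_apply]
  simp_rw [inner_sum, inner_incl_right]

lemma inner_matOp_left (A : Matrix (Fin n) (Fin n) (X →L[ℂ] X)) (w v : l2 (Fin n) X) :
    ⟪matOp A w, v⟫ = ∑ k : Fin n, ∑ l : Fin n, ⟪A k l (w l), v k⟫ := by
  rw [matOp_apply]
  simp_rw [sum_inner, inner_incl_left]

lemma adjoint_matOp (A : Matrix (Fin n) (Fin n) (X →L[ℂ] X)) :
    ContinuousLinearMap.adjoint (matOp A)
      = matOp (fun k l => ContinuousLinearMap.adjoint (A l k)) := by
  symm
  rw [ContinuousLinearMap.eq_adjoint_iff]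
  intro x y
  erw [inner_matOp_left, inner_matOp_right, Finset.sum_comm]
  simp_rw [adjoint_inner_left]

lemma coord_sum (u : Fin n → X) (k : Fin n) :
    (↑(∑ j : Fin n, inclCLM X j (u j) : l2 (Fin n) X) : Fin n → X) k = u k := by
  rw [← evalCLM_apply, map_sum]
  have h : ∀ j : Fin n, evalCLM X k (inclCLM X j (u j)) = if k = j then u j else 0 := by
    intro j
    rw [evalCLM_apply, inclCLM_apply]
    by_cases h : k = j
    · subst h; simp [lp.single_apply_self]
    · simp [lp.single_apply_ne 2 j _ h, h]
  simp_rw [h]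
  simp

lemma matOp_slice (A : Matrix (Fin n) (Fin n) (X →L[ℂ] Y)) (k l : Fin n) :
    (evalCLM Y k).comp ((matOp A).comp (inclCLM X l)) = A k l := by
  ext x
  simp only [ContinuousLinearMap.comp_apply, matOp_apply, map_sum]
  have h1 : ∀ l' : Fin n, ((inclCLM X l x : l2 (Fin n) X) : Fin n → X) l' = if l' = l then x else 0 := by
    intro l'
    by_cases h : l' = l
    · subst h; simp [lp.single_apply_self]
    · simp [lp.single_apply_ne 2 l _ h, h]
  have h2 : ∀ k' l' : Fin n,
      evalCLM Y k (inclCLM Y k' (A k' l' (((inclCLM X l x : l2 (Fin n) X) : Fin n → X) l')))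
        = if k = k' then (if l' = l then A k' l' x else 0) else 0 := by
    intro k' l'
    have := DFunLike.congr_fun (eval_comp_incl k k') (A k' l' (((inclCLM X l x : l2 (Fin n) X) : Fin n → X) l'))
    simp only [ContinuousLinearMap.comp_apply] at this
    rw [this]
    by_cases h : k = k'
    · simp only [h, if_true]
      rw [h1 l']
      by_cases h' : l' = l
      · simp [h']
      · simp [h']
    · simp [h]
  simp_rw [h2]
  simp

end Aux

section Main
set_option maxHeartbeats 1000000
set_option synthInstance.maxHeartbeats 1000000

variable {I : Type*} [DecidableEq I]
variable {H K : Type*} [NormedAddCommGroup H] [InnerProductSpace ℂ H] [CompleteSpace H]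
  [NormedAddCommGroup K] [InnerProductSpace ℂ K] [CompleteSpace K]

lemma gram_pos {m : ℕ} (x : Fin m → (l2 I H →L[ℂ] l2 I H)) :
    (matOp fun k l => (ContinuousLinearMap.adjoint (x k)).comp (x l)).IsPositive := by
  constructor
  · rw [← ContinuousLinearMap.isSelfAdjoint_iff_isSymmetric, ContinuousLinearMap.isSelfAdjoint_iff']
    erw [adjoint_matOp]
    congr 1
    funext k l
    simp [ContinuousLinearMap.adjoint_comp]
  · intro w
    rw [ContinuousLinearMap.reApplyInnerSelf]
    have h : ⟪(matOp fun k l => (ContinuousLinearMap.adjoint (x k)).comp (x l)) w, w⟫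
        = ⟪∑ l, x l (w l), ∑ k, x k (w k)⟫ := by
      erw [inner_matOp_left, sum_inner]
      rw [Finset.sum_comm]
      congr 1
      funext k
      rw [inner_sum]
      congr 1
      funext l
      rw [ContinuousLinearMap.comp_apply, adjoint_inner_left]
    rw [h]
    exact inner_self_nonneg

lemma key_pos (φ : (l2 I H →L[ℂ] l2 I H) →ₗ[ℂ] (l2 I K →L[ℂ] l2 I K))
    (hCP : ∀ (n : ℕ) (A : Matrix (Fin n) (Fin n) (l2 I H →L[ℂ] l2 I H)),
      (matOp A).IsPositive → (matOp fun k l => φ (A k l)).IsPositive)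
    {m : ℕ} (x : Fin m → (l2 I H →L[ℂ] l2 I H)) (u : Fin m → l2 I K) :
    0 ≤ (∑ k : Fin m, ∑ l : Fin m,
        ⟪u k, φ ((ContinuousLinearMap.adjoint (x k)).comp (x l)) (u l)⟫).re := by
  have hpos := hCP m _ (gram_pos x)
  set S := matOp fun k l => φ ((ContinuousLinearMap.adjoint (x k)).comp (x l)) with hSdef
  set w : l2 (Fin m) (l2 I K) := ∑ j : Fin m, inclCLM (l2 I K) j (u j) with hwdef
  have h0 := hpos.2 w
  rw [ContinuousLinearMap.reApplyInnerSelf] at h0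
  rw [inner_re_symm] at h0
  erw [inner_matOp_right] at h0
  simp_rw [hwdef, coord_sum] at h0
  exact h0

lemma phi_star (φ : (l2 I H →L[ℂ] l2 I H) →ₗ[ℂ] (l2 I K →L[ℂ] l2 I K))
    (hCP : ∀ (n : ℕ) (A : Matrix (Fin n) (Fin n) (l2 I H →L[ℂ] l2 I H)),
      (matOp A).IsPositive → (matOp fun k l => φ (A k l)).IsPositive)
    (T : l2 I H →L[ℂ] l2 I H) :
    φ (ContinuousLinearMap.adjoint T) = ContinuousLinearMap.adjoint (φ T) := by
  set x : Fin 2 → (l2 I H →L[ℂ] l2 I H) := ![1, T] with hx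
  have hpos := hCP 2 _ (gram_pos x)
  set S := matOp fun k l => φ ((ContinuousLinearMap.adjoint (x k)).comp (x l)) with hSdef
  have hS : ContinuousLinearMap.adjoint S = S :=
    (ContinuousLinearMap.isSelfAdjoint_iff' ..).mp
      (ContinuousLinearMap.isSelfAdjoint_iff_isSymmetric.mpr hpos.1)
  have h10 := matOp_slice (fun k l => φ ((ContinuousLinearMap.adjoint (x k)).comp (x l))) 1 0
  have h01 := matOp_slice (fun k l => φ ((ContinuousLinearMap.adjoint (x k)).comp (x l))) 0 1
  rw [← hSdef] at h10 h01
  have hx0 : x 0 = 1 := rfl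
  have hx1 : x 1 = T := rfl
  have e10 : (ContinuousLinearMap.adjoint (x 1)).comp (x 0) = ContinuousLinearMap.adjoint T := by
    simp [hx0, hx1, ContinuousLinearMap.one_def, ContinuousLinearMap.comp_id]
  have e01 : (ContinuousLinearMap.adjoint (x 0)).comp (x 1) = T := by
    simp [hx0, hx1, ContinuousLinearMap.one_def, ContinuousLinearMap.adjoint_id]
  rw [e10] at h10
  rw [e01] at h01
  rw [← h10, ← h01]
  rw [ContinuousLinearMap.adjoint_comp, ContinuousLinearMap.adjoint_comp]
  rw [show ContinuousLinearMap.adjoint (evalCLM (l2 I K) (0 : Fin 2)) = inclCLM (l2 I K) 0 by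
    simp [evalCLM, ContinuousLinearMap.adjoint_adjoint]]
  rw [show ContinuousLinearMap.adjoint (inclCLM (l2 I K) (1 : Fin 2)) = evalCLM (l2 I K) 1 from rfl]
  rw [hS]
  rfl

end Main

section Main2
set_option maxHeartbeats 1000000
set_option synthInstance.maxHeartbeats 1000000

variable {I : Type*} [DecidableEq I]
variable {H K : Type*} [NormedAddCommGroup H] [InnerProductSpace ℂ H] [CompleteSpace H]
  [NormedAddCommGroup K] [InnerProductSpace ℂ K] [CompleteSpace K]

lemma phi_one_bound (φ : (l2 I H →L[ℂ] l2 I H) →ₗ[ℂ] (l2 I K →L[ℂ] l2 I K))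
    (hcontr : ∀ T : l2 I H →L[ℂ] l2 I H, ‖φ T‖ ≤ ‖T‖) (s : l2 I K) :
    (⟪s, φ 1 s⟫).re ≤ ‖s‖ ^ 2 := by
  have h1 : ‖φ (1 : l2 I H →L[ℂ] l2 I H)‖ ≤ 1 := by
    refine le_trans (hcontr 1) ?_
    simpa [ContinuousLinearMap.one_def] using ContinuousLinearMap.norm_id_le (E := l2 I H)
  have hb : ‖φ (1 : l2 I H →L[ℂ] l2 I H) s‖ ≤ ‖s‖ := by
    refine le_trans (ContinuousLinearMap.le_opNorm _ _) ?_
    have := mul_le_mul_of_nonneg_right h1 (norm_nonneg s)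
    simpa using this
  have h2 : (⟪s, φ 1 s⟫).re ≤ ‖s‖ * ‖φ 1 s‖ := by
    have := re_inner_le_norm (𝕜 := ℂ) s (φ 1 s)
    simpa [RCLike.re_to_complex] using this
  calc (⟪s, φ 1 s⟫).re ≤ ‖s‖ * ‖φ 1 s‖ := h2
    _ ≤ ‖s‖ * ‖s‖ := mul_le_mul_of_nonneg_left hb (norm_nonneg s)
    _ = ‖s‖ ^ 2 := by ring

lemma schwarz (φ : (l2 I H →L[ℂ] l2 I H) →ₗ[ℂ] (l2 I K →L[ℂ] l2 I K))
    (hCP : ∀ (n : ℕ) (A : Matrix (Fin n) (Fin n) (l2 I H →L[ℂ] l2 I H)),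
      (matOp A).IsPositive → (matOp fun k l => φ (A k l)).IsPositive)
    (hcontr : ∀ T : l2 I H →L[ℂ] l2 I H, ‖φ T‖ ≤ ‖T‖)
    (a b : l2 I H →L[ℂ] l2 I H) (ξ η : l2 I K) :
    ‖φ a ξ + φ b η‖ ^ 2 ≤
      (⟪ξ, φ ((ContinuousLinearMap.adjoint a).comp a) ξ⟫).re
      + (⟪ξ, φ ((ContinuousLinearMap.adjoint a).comp b) η⟫).re
      + (⟪η, φ ((ContinuousLinearMap.adjoint b).comp a) ξ⟫).re
      + (⟪η, φ ((ContinuousLinearMap.adjoint b).comp b) η⟫).re := by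
  set s := φ a ξ + φ b η with hs
  have h : 0 ≤ (∑ k : Fin 3, ∑ l : Fin 3,
      ⟪(![ξ, η, -s]) k, φ ((ContinuousLinearMap.adjoint ((![a, b, 1]) k)).comp
        ((![a, b, 1]) l)) ((![ξ, η, -s]) l)⟫).re := key_pos φ hCP ![a, b, 1] ![ξ, η, -s]
  have e1 : ∀ c : l2 I H →L[ℂ] l2 I H, c.comp 1 = c := fun c => by
    rw [ContinuousLinearMap.one_def, ContinuousLinearMap.comp_id]
  have e2 : ∀ c : l2 I H →L[ℂ] l2 I H,
      (ContinuousLinearMap.adjoint (1 : l2 I H →L[ℂ] l2 I H)).comp c = c := fun c => by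
    rw [ContinuousLinearMap.one_def, ContinuousLinearMap.adjoint_id,
      ContinuousLinearMap.id_comp]
  simp only [Fin.sum_univ_three, Matrix.cons_val_zero, Matrix.cons_val_one, Matrix.head_cons,
    Matrix.cons_val_two, Matrix.tail_cons, e1, e2, phi_star φ hCP, map_neg,
    inner_neg_left, inner_neg_right, ContinuousLinearMap.neg_apply,
    ContinuousLinearMap.adjoint_inner_right, Complex.add_re, Complex.neg_re] at h
  have hr1 : (⟪φ a ξ, s⟫).re + (⟪φ b η, s⟫).re = ‖s‖ ^ 2 := by
    rw [← Complex.add_re, ← inner_add_left, ← hs]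
    exact inner_self_eq_norm_sq (𝕜 := ℂ) s
  have hr2 : (⟪s, φ a ξ⟫).re + (⟪s, φ b η⟫).re = ‖s‖ ^ 2 := by
    rw [← Complex.add_re, ← inner_add_right, ← hs]
    exact inner_self_eq_norm_sq (𝕜 := ℂ) s
  have hb := phi_one_bound φ hcontr s
  have h3 : (⟪(φ (1 : l2 I H →L[ℂ] l2 I H)) s, s⟫).re = (⟪s, (φ 1) s⟫).re := by
    rw [← inner_conj_symm s ((φ (1 : l2 I H →L[ℂ] l2 I H)) s)]
    exact Complex.conj_re _
  simp only [neg_neg] at h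
  rw [h3] at h
  linarith

end Main2

section Main3
set_option maxHeartbeats 1000000
set_option synthInstance.maxHeartbeats 1000000

variable {I : Type*} [DecidableEq I]
variable {H K : Type*} [NormedAddCommGroup H] [InnerProductSpace ℂ H] [CompleteSpace H]
  [NormedAddCommGroup K] [InnerProductSpace ℂ K] [CompleteSpace K]

lemma adjoint_projCLM (i : I) :
    ContinuousLinearMap.adjoint (projCLM H i) = projCLM H i := by
  rw [projCLM, ContinuousLinearMap.adjoint_comp]
  rw [show ContinuousLinearMap.adjoint (evalCLM H i) = inclCLM H i by
    rw [evalCLM, ContinuousLinearMap.adjoint_adjoint]]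
  rfl

lemma projCLM_idem (i : I) :
    (projCLM H i).comp (projCLM H i) = projCLM H i := by
  ext x
  simp [projCLM, lp.single_apply_self]

lemma left_mult (φ : (l2 I H →L[ℂ] l2 I H) →ₗ[ℂ] (l2 I K →L[ℂ] l2 I K))
    (hCP : ∀ (n : ℕ) (A : Matrix (Fin n) (Fin n) (l2 I H →L[ℂ] l2 I H)),
      (matOp A).IsPositive → (matOp fun k l => φ (A k l)).IsPositive)
    (hcontr : ∀ T : l2 I H →L[ℂ] l2 I H, ‖φ T‖ ≤ ‖T‖)
    (i : I) (hproj : φ (projCLM H i) = projCLM K i) (T : l2 I H →L[ℂ] l2 I H) :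
    φ ((projCLM H i).comp T) = (projCLM K i).comp (φ T) := by
  set p := projCLM H i with hp
  set q := projCLM K i with hq
  have hpadj : ContinuousLinearMap.adjoint p = p := adjoint_projCLM i
  have hqadj : ContinuousLinearMap.adjoint q = q := adjoint_projCLM i
  have hpp : p.comp p = p := projCLM_idem i
  have hqq : q.comp q = q := projCLM_idem i
  set D := φ (p.comp T) - q.comp (φ T) with hD
  -- the key inequality
  have key : ∀ (ξ η : l2 I K), 0 ≤ 2 * (⟪ξ, D η⟫).re
      + ((⟪η, φ ((ContinuousLinearMap.adjoint T).comp T) η⟫).re - ‖φ T η‖ ^ 2) := by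
    intro ξ η
    have hs := schwarz φ hCP hcontr p T ξ η
    -- rewrite the Schwarz RHS
    have r1 : (ContinuousLinearMap.adjoint p).comp p = p := by rw [hpadj, hpp]
    have r2 : (ContinuousLinearMap.adjoint p).comp T = p.comp T := by rw [hpadj]
    rw [r1, r2, hproj] at hs
    -- third term
    have r3 : φ ((ContinuousLinearMap.adjoint T).comp p)
        = ContinuousLinearMap.adjoint (φ (p.comp T)) := by
      rw [← phi_star φ hCP, ContinuousLinearMap.adjoint_comp, hpadj]
    rw [r3] at hs
    have r4 : (⟪η, ContinuousLinearMap.adjoint (φ (p.comp T)) ξ⟫).re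
        = (⟪ξ, φ (p.comp T) η⟫).re := by
      rw [ContinuousLinearMap.adjoint_inner_right]
      rw [← inner_conj_symm ξ]
      exact Complex.conj_re _
    rw [r4] at hs
    -- LHS expansion
    have lhs : ‖φ p ξ + φ T η‖ ^ 2
        = ‖q ξ‖ ^ 2 + 2 * (⟪q ξ, φ T η⟫).re + ‖φ T η‖ ^ 2 := by
      rw [hproj]
      exact norm_add_sq (𝕜 := ℂ) _ _
    rw [hproj] at lhs
    rw [lhs] at hs
    -- first RHS term
    have hq1 : (⟪ξ, q ξ⟫).re = ‖q ξ‖ ^ 2 := by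
      have h' : (⟪q ξ, q ξ⟫ : ℂ) = ⟪ξ, q ξ⟫ := by
        rw [← ContinuousLinearMap.adjoint_inner_right q ξ (q ξ), hqadj,
          ← ContinuousLinearMap.comp_apply, hqq]
      rw [← h']
      exact inner_self_eq_norm_sq (𝕜 := ℂ) _
    rw [hq1] at hs
    -- second term: ⟪q ξ, φ T η⟫ = ⟪ξ, q (φ T η)⟫
    have hq2 : (⟪q ξ, φ T η⟫) = ⟪ξ, q.comp (φ T) η⟫ := by
      rw [ContinuousLinearMap.comp_apply]
      conv_lhs => rw [← hqadj]
      rw [ContinuousLinearMap.adjoint_inner_left]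
    rw [hq2] at hs
    have hDsplit : (⟪ξ, φ (p.comp T) η⟫).re
        = (⟪ξ, D η⟫).re + (⟪ξ, q.comp (φ T) η⟫).re := by
      rw [hD]
      simp [inner_sub_right, Complex.sub_re]
    rw [hDsplit] at hs
    linarith
  -- conclude D = 0
  have hDzero : D = 0 := by
    refine ContinuousLinearMap.ext fun η => ?_
    rw [ContinuousLinearMap.zero_apply]
    have hnorm : ‖D η‖ = 0 := by
      by_contra hne
      have hpos : 0 < ‖D η‖ ^ 2 := by
        have := norm_nonneg (D η)
        have : (0:ℝ) < ‖D η‖ := lt_of_le_of_ne this (Ne.symm hne)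
        positivity
      set C := (⟪η, φ ((ContinuousLinearMap.adjoint T).comp T) η⟫).re - ‖φ T η‖ ^ 2 with hC
      have hparam : ∀ t : ℝ, 0 ≤ 2 * (t * ‖D η‖ ^ 2) + C := by
        intro t
        have := key ((t : ℂ) • D η) η
        rw [inner_smul_left] at this
        have hre : ((starRingEnd ℂ) (t : ℂ) * ⟪D η, D η⟫).re = t * ‖D η‖ ^ 2 := by
          rw [Complex.conj_ofReal]
          rw [show (⟪D η, D η⟫ : ℂ) = (‖D η‖ : ℂ) ^ 2 from inner_self_eq_norm_sq_to_K _]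
          norm_cast
        rw [hre] at this
        exact this
      have := hparam (-(C + 1) / (2 * ‖D η‖ ^ 2))
      rw [show 2 * (-(C + 1) / (2 * ‖D η‖ ^ 2) * ‖D η‖ ^ 2) = -(C + 1) by
        field_simp] at this
      linarith
    exact norm_eq_zero.mp hnorm
  have := sub_eq_zero.mp hDzero
  exact this

lemma right_mult (φ : (l2 I H →L[ℂ] l2 I H) →ₗ[ℂ] (l2 I K →L[ℂ] l2 I K))
    (hCP : ∀ (n : ℕ) (A : Matrix (Fin n) (Fin n) (l2 I H →L[ℂ] l2 I H)),
      (matOp A).IsPositive → (matOp fun k l => φ (A k l)).IsPositive)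
    (hcontr : ∀ T : l2 I H →L[ℂ] l2 I H, ‖φ T‖ ≤ ‖T‖)
    (j : I) (hproj : φ (projCLM H j) = projCLM K j) (T : l2 I H →L[ℂ] l2 I H) :
    φ (T.comp (projCLM H j)) = (φ T).comp (projCLM K j) := by
  have h1 : T.comp (projCLM H j)
      = ContinuousLinearMap.adjoint ((projCLM H j).comp (ContinuousLinearMap.adjoint T)) := by
    rw [ContinuousLinearMap.adjoint_comp, ContinuousLinearMap.adjoint_adjoint, adjoint_projCLM]
  rw [h1, phi_star φ hCP, left_mult φ hCP hcontr j hproj,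
    ContinuousLinearMap.adjoint_comp, adjoint_projCLM, phi_star φ hCP,
    ContinuousLinearMap.adjoint_adjoint]

end Main3


/-- If a completely positive contractive linear map
`φ : B(ℓ²(I;H)) → B(ℓ²(I;K))` satisfies `φ(pᵢ) = pᵢ` for all `i`, then
`φ(pᵢ ∘ T ∘ pⱼ) = pᵢ ∘ φ(T) ∘ pⱼ` for every `T` and all `i, j`. -/
theorem cpc_projection_bimodule
    (φ : (l2 I H →L[ℂ] l2 I H) →ₗ[ℂ] (l2 I K →L[ℂ] l2 I K))
    (hCP : ∀ (n : ℕ) (A : Matrix (Fin n) (Fin n) (l2 I H →L[ℂ] l2 I H)),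
      (matOp A).IsPositive → (matOp fun k l => φ (A k l)).IsPositive)
    (hcontr : ∀ T : l2 I H →L[ℂ] l2 I H, ‖φ T‖ ≤ ‖T‖)
    (hproj : ∀ i : I, φ (projCLM H i) = projCLM K i) :
    ∀ (T : l2 I H →L[ℂ] l2 I H) (i j : I),
      φ ((projCLM H i).comp (T.comp (projCLM H j)))
        = (projCLM K i).comp ((φ T).comp (projCLM K j)) := by
  intro T i j
  rw [left_mult φ hCP hcontr i (hproj i) (T.comp (projCLM H j)),
    right_mult φ hCP hcontr j (hproj j) T]

end
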